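/- arXiv:1807.00481 — 2 statements merged into one kernel-verified Lean document; each statement's English description precedes it below -/
import Mathlib

section
/- Let a finite group G act on a finite set X, and for g ∈ G let ρ(g) be the corresponding X × X permutation matrix. Let A be an X × X matrix with integer entries such that A ρ(g) = ρ(g) A for all g ∈ G. Assume: (i) the permutation representation of G on ℂ[X] is multiplicity free, i.e., for every irreducible complex representation W of G the dimension of the space of G-equivariant linear maps from W to ℂ[X] is at most 1; and (ii) every irreducible G-subrepresentation of ℂ[X] has integer-valued character. Then every complex eigenvalue of A is an integer. -/
/-- The permutation matrix of `g ∈ G` acting on the finite set `X`. -/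
def permMat (G X : Type) [Group G] [MulAction G X] [Fintype X] [DecidableEq X]
    (g : G) : Matrix X X ℂ :=
  Matrix.of fun x y => if g • y = x then 1 else 0

/-- The space of `G`-equivariant linear maps between (the spaces of) two
representations of `G`. -/
def equivariantMaps (G : Type) [Group G] {W V : Type} [AddCommGroup W] [Module ℂ W]
    [AddCommGroup V] [Module ℂ V] (ρW : Representation ℂ G W) (ρV : Representation ℂ G V) :
    Submodule ℂ (W →ₗ[ℂ] V) where
  carrier := {f | ∀ (g : G) (w : W), f (ρW g w) = ρV g (f w)}
  add_mem' := by
    intro f₁ f₂ h₁ h₂ g w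
    simp [h₁ g w, h₂ g w]
  zero_mem' := by
    intro g w
    simp
  smul_mem' := by
    intro c f hf g w
    simp [hf g w]

/-- A representation `ρ` of `G` on `V` is irreducible if `V` is nonzero and the only
`G`-invariant subspaces are `⊥` and `⊤`. -/
def IsIrreducibleRep (G : Type) [Group G] {V : Type} [AddCommGroup V] [Module ℂ V]
    (ρ : Representation ℂ G V) : Prop :=
  Nontrivial V ∧ ∀ U : Submodule ℂ V, (∀ (g : G) (v : V), v ∈ U → ρ g v ∈ U) → U = ⊥ ∨ U = ⊤

/-- The permutation representation of `G` on `X →₀ ℂ` (Mathlib's former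
`Representation.ofMulAction`, which was stated on `X →₀ k`). -/
noncomputable def ofMulActionFinsupp (G X : Type) [Group G] [MulAction G X] :
    Representation ℂ G (X →₀ ℂ) where
  toFun g := Finsupp.lmapDomain ℂ ℂ (g • ·)
  map_one' := by ext x y; simp
  map_mul' x y := by ext z w; simp [mul_smul]

/-!
Since `A` commutes with `G`, its `c`-eigenspace in `ℂ[X]` contains an irreducible
subrepresentation `U`. By multiplicity freeness the intertwiners `U → ℂ[X]` are the multiples of
the inclusion, and postcomposition with `A` acts on them as `c`. Computing the trace of this
action through the averaging projection onto the intertwiners gives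
`|G| c = ∑ g, tr (A ρ(g)) χ_U(g⁻¹)`, an integer. So `c` is rational, and being a root of the
monic integer polynomial `charpoly A`, it is an integer.
-/

open LinearMap TensorProduct Representation Module

theorem LinearMap.trace_llcomp_comp_lcomp {R M N : Type*} [CommRing R] [AddCommGroup M]
    [Module R M] [AddCommGroup N] [Module R N] [Module.Free R M] [Module.Finite R M]
    [Module.Free R N] [Module.Finite R N] (a : Module.End R N) (b : Module.End R M) :
    trace R (M →ₗ[R] N) (llcomp R M N N a ∘ₗ lcomp R N b) = trace R N a * trace R M b := by
  let e : (Dual R M ⊗[R] N) ≃ₗ[R] (M →ₗ[R] N) := dualTensorHomEquiv R M N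
  have : llcomp R M N N a ∘ₗ lcomp R N b = e.conj (map (Dual.transpose (R := R) b) a) := by
    rw [LinearEquiv.conj_apply, LinearEquiv.eq_comp_toLinearMap_symm]
    ext φ u m
    simp [e, Dual.transpose]
  -- naming the types makes `trace_conj'` use the `AddCommGroup` instances of the goal
  rw [this, trace_conj' (M := Dual R M ⊗[R] N) (N := M →ₗ[R] N), trace_tensorProduct',
    trace_transpose', mul_comm]

namespace Representation

variable {k G W V : Type*} [Field k] [Group G] [Fintype G] [Invertible (Fintype.card G : k)]
  [AddCommGroup W] [Module k W] [FiniteDimensional k W]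
  [AddCommGroup V] [Module k V] [FiniteDimensional k V]

theorem trace_llcomp_comp_averageMap_linHom (ρW : Representation k G W)
    (ρV : Representation k G V) (B : Module.End k V) :
    trace k (W →ₗ[k] V) (llcomp k W V V B * averageMap (linHom ρW ρV)) =
      ⅟(Fintype.card G : k) * ∑ g : G, trace k V (B * ρV g) * trace k W (ρW g⁻¹) := by
  have h (g : G) : llcomp k W V V B * linHom ρW ρV g =
      llcomp k W V V (B * ρV g) ∘ₗ lcomp k V (ρW g⁻¹) := by
    ext f w
    simp
  simp [averageMap, GroupAlgebra.average, map_sum, Finset.mul_sum, h, trace_llcomp_comp_lcomp]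

theorem sum_trace_mul_trace_eq_of_forall_invariants (ρW : Representation k G W)
    (ρV : Representation k G V) {B : Module.End k V} {c : k}
    (hB : ∀ f ∈ (linHom ρW ρV).invariants, B ∘ₗ f = c • f) :
    ∑ g : G, trace k V (B * ρV g) * trace k W (ρW g⁻¹) =
      (Fintype.card G : k) * c * finrank k (linHom ρW ρV).invariants := by
  have hcomp :
      llcomp k W V V B * averageMap (linHom ρW ρV) = c • averageMap (linHom ρW ρV) := by
    ext1 f
    exact hB _ (averageMap_invariant _ f)
  have := trace_llcomp_comp_averageMap_linHom ρW ρV B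
  rw [hcomp, map_smul, (isProj_averageMap _).trace, smul_eq_mul] at this
  rw [← mul_invOf_cancel_left (Fintype.card G : k) (∑ g : G, _), ← this]
  ring

end Representation

theorem Representation.invariants_linHom_eq_equivariantMaps {G W V : Type} [Group G]
    [AddCommGroup W] [Module ℂ W] [AddCommGroup V] [Module ℂ V]
    (ρW : Representation ℂ G W) (ρV : Representation ℂ G V) :
    (linHom ρW ρV).invariants = equivariantMaps G ρW ρV := by
  ext f
  rw [mem_invariants]
  simp only [linHom_apply, mem_linHom_invariants_iff_isIntertwining, isIntertwiningMap_iff]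
  rfl

namespace Subrepresentation

variable {k G V : Type*} [Field k] [Monoid G] [AddCommGroup V] [Module k V]
  {ρ : Representation k G V}

instance [FiniteDimensional k V] : IsAtomic (Subrepresentation ρ) :=
  have : WellFoundedLT (Subrepresentation ρ) :=
    StrictMono.wellFoundedLT (f := toSubmodule) fun _ _ h ↦ h
  isAtomic_of_orderBot_wellFounded_lt wellFounded_lt

variable (ρ) in
def eigenspace {B : Module.End k V} (hB : ∀ g, Commute B (ρ g))
    (c : k) : Subrepresentation ρ where
  toSubmodule := Module.End.eigenspace B c
  apply_mem_toSubmodule g v hv := by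
    rw [Module.End.mem_eigenspace_iff] at hv ⊢
    rw [← Module.End.mul_apply, (hB g).eq, Module.End.mul_apply, hv, map_smul]

theorem eq_bot_or_eq_of_isAtom {U : Subrepresentation ρ} (hU : IsAtom U)
    (U' : Submodule k V) (hle : U' ≤ U.toSubmodule)
    (hU' : ∀ (g : G) (v : V), v ∈ U' → ρ g v ∈ U') : U' = ⊥ ∨ U' = U.toSubmodule := by
  rcases hU.le_iff.mp (show (⟨U', hU'⟩ : Subrepresentation ρ) ≤ U from hle) with h | h
  · exact .inl (congrArg toSubmodule h)
  · exact .inr (congrArg toSubmodule h)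

end Subrepresentation

theorem Subrepresentation.isIrreducibleRep_toRepresentation {G V : Type} [Group G]
    [AddCommGroup V] [Module ℂ V] {ρ : Representation ℂ G V} {U : Subrepresentation ρ}
    (hU : IsAtom U) : IsIrreducibleRep G U.toRepresentation := by
  refine ⟨Submodule.nontrivial_iff_ne_bot.mpr fun h ↦ hU.1 (toSubmodule_injective h), ?_⟩
  intro W hW
  have hinj := Submodule.map_injective_of_injective U.toSubmodule.injective_subtype
  rcases eq_bot_or_eq_of_isAtom hU (W.map U.toSubmodule.subtype) (Submodule.map_subtype_le _ _)
    (by rintro g _ ⟨w, hw, rfl⟩; exact ⟨_, hW g w hw, rfl⟩) with h | h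
  · exact .inl (hinj (by rw [h, Submodule.map_bot]))
  · exact .inr (hinj (by rw [h, Submodule.map_top, Submodule.range_subtype]))

theorem Subrepresentation.card_mul_eq_sum_trace_mul_character {G V : Type} [Group G]
    [Fintype G] [AddCommGroup V] [Module ℂ V] [FiniteDimensional ℂ V]
    {ρ : Representation ℂ G V} {B : Module.End ℂ V} {c : ℂ} (U : Subrepresentation ρ)
    (hU : U ≠ ⊥) (hUB : U.toSubmodule ≤ Module.End.eigenspace B c)
    (hmf : finrank ℂ (equivariantMaps G U.toRepresentation ρ) ≤ 1) :
    (Fintype.card G : ℂ) * c =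
      ∑ g : G, trace ℂ V (B * ρ g) * U.toRepresentation.character g⁻¹ := by
  have : Invertible (Fintype.card G : ℂ) := invertibleOfNonzero (by simp)
  rw [← invariants_linHom_eq_equivariantMaps] at hmf
  have hι : U.toSubmodule.subtype ∈ (linHom U.toRepresentation ρ).invariants := by
    rw [invariants_linHom_eq_equivariantMaps]
    exact fun _ _ ↦ rfl
  have hι0 : (⟨_, hι⟩ : (linHom U.toRepresentation ρ).invariants) ≠ 0 := fun h ↦ hU <|
    toSubmodule_injective (by simpa using congrArg (range ∘ Subtype.val) h : U.toSubmodule = ⊥)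
  have hrank : finrank ℂ (linHom U.toRepresentation ρ).invariants = 1 :=
    le_antisymm hmf (finrank_pos_iff_exists_ne_zero.mpr ⟨_, hι0⟩)
  have hB : ∀ f ∈ (linHom U.toRepresentation ρ).invariants, B ∘ₗ f = c • f := by
    intro f hf
    obtain ⟨a, ha⟩ := exists_smul_eq_of_finrank_eq_one hrank hι0 ⟨f, hf⟩
    obtain rfl : a • U.toSubmodule.subtype = f := congrArg Subtype.val ha
    ext u
    simpa [smul_comm a c] using congrArg (a • ·) (Module.End.mem_eigenspace_iff.mp (hUB u.2))
  simp only [character]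
  rw [sum_trace_mul_trace_eq_of_forall_invariants _ _ hB, hrank, Nat.cast_one, mul_one]

theorem Matrix.isIntegral_of_hasEigenvalue_toLin'_map_intCast {K n : Type*} [Field K]
    [Fintype n] [DecidableEq n] (A : Matrix n n ℤ) {c : K}
    (hc : Module.End.HasEigenvalue (toLin' (A.map (Int.cast : ℤ → K))) c) :
    IsIntegral ℤ c := by
  refine ⟨A.charpoly, A.charpoly_monic, ?_⟩
  rw [Module.End.hasEigenvalue_iff_isRoot_charpoly, charpoly_toLin',
    show A.map (Int.cast : ℤ → K) = A.map (Int.castRingHom K) from rfl, charpoly_map,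
    Polynomial.IsRoot, Polynomial.eval_map] at hc
  rwa [algebraMap_int_eq]

theorem exists_intCast_eq_of_isIntegral_of_natCast_mul_eq {K : Type*} [Field K] [CharZero K]
    {c : K} (hc : IsIntegral ℤ c) {n : ℕ} (hn : n ≠ 0) {m : ℤ} (h : n * c = m) :
    ∃ k : ℤ, c = k := by
  have hc' : algebraMap ℚ K (m / n) = c := by
    rw [map_div₀, map_intCast, map_natCast, ← h,
      mul_div_cancel_left₀ _ (Nat.cast_ne_zero.mpr hn)]
  rw [← hc', isIntegral_algebraMap_iff (algebraMap ℚ K).injective,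
    IsIntegrallyClosed.isIntegral_iff] at hc
  obtain ⟨k, hk⟩ := hc
  exact ⟨k, by rw [← hc', ← hk]; simp⟩

theorem Matrix.hasEigenvalue_toLin_iff {K M n : Type*} [Field K] [AddCommGroup M] [Module K M]
    [Fintype n] [DecidableEq n] (A : Matrix n n K) (b : Basis n K M) {c : K} :
    Module.End.HasEigenvalue (toLin b b A) c ↔ Module.End.HasEigenvalue (toLin' A) c := by
  have := Module.Finite.of_basis b
  simp only [Module.End.hasEigenvalue_iff_isRoot_charpoly, charpoly_toLin, charpoly_toLin']

theorem toLin_basisSingleOne_permMat {G X : Type} [Group G] [MulAction G X] [Fintype X]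
    [DecidableEq X] (g : G) :
    Matrix.toLin Finsupp.basisSingleOne Finsupp.basisSingleOne (permMat G X g) =
      ofMulActionFinsupp G X g := by
  refine Finsupp.basisSingleOne.ext fun y ↦ Finsupp.ext fun x ↦ ?_
  rw [Matrix.toLin_self]
  simp [permMat, ofMulActionFinsupp, Finsupp.single_apply]

theorem trace_map_intCast_mul_permMat {G X : Type} [Group G] [MulAction G X] [Fintype X]
    [DecidableEq X] (A : Matrix X X ℤ) (g : G) :
    (A.map (Int.cast : ℤ → ℂ) * permMat G X g).trace =
      ((∑ x, A x (g • x) : ℤ) : ℂ) := by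
  simp [Matrix.trace, Matrix.mul_apply, permMat]

/-- Let a finite group `G` act on a finite set `X` and let `A` be an integer matrix
commuting with all the permutation matrices of the action. If the permutation
representation of `G` on `ℂ[X]` is multiplicity free (every irreducible representation
of `G` maps into it with multiplicity at most one) and every irreducible
`G`-subrepresentation of `ℂ[X]` has integer-valued character, then every complex
eigenvalue of `A` is an integer. -/
theorem eigenvalues_integral_of_multiplicity_free
    (G X : Type) [Group G] [Fintype G] [Fintype X] [DecidableEq X] [MulAction G X]
    (A : Matrix X X ℤ)
    (hcomm : ∀ g : G, A.map (Int.cast : ℤ → ℂ) * permMat G X g =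
      permMat G X g * A.map (Int.cast : ℤ → ℂ))
    (hmf : ∀ (W : Type) (_ : AddCommGroup W) (_ : Module ℂ W) (ρW : Representation ℂ G W),
      IsIrreducibleRep G ρW →
      Module.finrank ℂ (equivariantMaps G ρW (ofMulActionFinsupp G X)) ≤ 1)
    (hint : ∀ U : Submodule ℂ (X →₀ ℂ),
      (hU : ∀ (g : G) (v : X →₀ ℂ), v ∈ U → ofMulActionFinsupp G X g v ∈ U) →
      U ≠ ⊥ →
      (∀ U' : Submodule ℂ (X →₀ ℂ), U' ≤ U →
        (∀ (g : G) (v : X →₀ ℂ), v ∈ U' → ofMulActionFinsupp G X g v ∈ U') →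
        U' = ⊥ ∨ U' = U) →
      ∀ g : G, ∃ m : ℤ,
        LinearMap.trace ℂ U ((ofMulActionFinsupp G X g).restrict
          (fun v hv => hU g v hv)) = (m : ℂ)) :
    ∀ c : ℂ, Module.End.HasEigenvalue
      (Matrix.toLin' (A.map (Int.cast : ℤ → ℂ))) c → ∃ m : ℤ, c = (m : ℂ) := by
  intro c hc
  set ρ := ofMulActionFinsupp G X
  set b : Basis X ℂ (X →₀ ℂ) := Finsupp.basisSingleOne
  set B := Matrix.toLin b b (A.map (Int.cast : ℤ → ℂ))
  have hB (g : G) : Commute B (ρ g) := by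
    rw [commute_iff_eq, ← toLin_basisSingleOne_permMat, Module.End.mul_eq_comp,
      Module.End.mul_eq_comp, ← Matrix.toLin_mul b b b, hcomm, Matrix.toLin_mul b b b]
  have hE : Subrepresentation.eigenspace ρ hB c ≠ ⊥ := fun h ↦
    Module.End.hasEigenvalue_iff.mp ((Matrix.hasEigenvalue_toLin_iff _ b).mpr hc)
      (congrArg Subrepresentation.toSubmodule h)
  obtain ⟨U, hU, hUE⟩ := (eq_bot_or_exists_atom_le _).resolve_left hE
  choose m hm using hint U.toSubmodule (fun g _ hv ↦ U.apply_mem_toSubmodule g hv)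
    (fun h ↦ hU.1 (Subrepresentation.toSubmodule_injective h))
    (Subrepresentation.eq_bot_or_eq_of_isAtom hU)
  have key := U.card_mul_eq_sum_trace_mul_character hU.1 hUE
    (hmf _ _ _ _ (Subrepresentation.isIrreducibleRep_toRepresentation hU))
  refine exists_intCast_eq_of_isIntegral_of_natCast_mul_eq
    (Matrix.isIntegral_of_hasEigenvalue_toLin'_map_intCast A hc) (Fintype.card_ne_zero (α := G))
    (m := ∑ g : G, (∑ x, A x (g • x)) * m g⁻¹) ?_
  rw [key]
  push_cast
  refine Finset.sum_congr rfl fun g _ ↦ ?_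
  rw [← toLin_basisSingleOne_permMat, Module.End.mul_eq_comp, ← Matrix.toLin_mul b b b,
    Matrix.trace_toLin_eq, trace_map_intCast_mul_permMat, ← hm]
  push_cast
  rfl
end

section
/- Let n ≥ 2 and let e be a fixed edge of the complete graph on Fin (2n) (a fixed transposition). In the permutation module ℂ[M_{2n}], let v = Σ_{A ∈ M_{2n}} A − (2n−1) · Σ_{A ∈ M_{2n}, e ∈ A} A, where the second sum is over perfect matchings containing the edge e. Then v is a simultaneous eigenvector of all the matrices N_{2μ}, μ a partition of n; explicitly, for each partition μ of n: if 1 is not a part of μ then N_{2μ} v = (P(2μ) / (−(2n−2))) · v, and if 1 is a part of μ then N_{2μ} v = ((P(2μ) − (2n−1) · P'(2μ')) / (−(2n−2))) · v, where P(2μ) is the number of perfect matchings B of Fin (2n) with d(J,B) = 2μ for a fixed perfect matching J of Fin (2n), μ' is the partition of n−1 obtained from μ by deleting one part equal to 1, and P'(2μ') is the number of perfect matchings B' of Fin (2n−2) with d(J',B') = 2μ' for a fixed perfect matching J' of Fin (2n−2). -/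
/-- The multiset of cardinalities of the orbits of a subgroup of permutations
acting on a finite type. -/
noncomputable def orbitSizes {α : Type*} [Fintype α] (G : Subgroup (Equiv.Perm α)) :
    Multiset ℕ :=
  letI : Fintype (Quotient (MulAction.orbitRel G α)) := Fintype.ofFinite _
  (Finset.univ : Finset (Quotient (MulAction.orbitRel G α))).val.map
    fun q => Nat.card (MulAction.orbit G q.out)

/-- `d(A,B)`. -/
noncomputable def dMatch {N : ℕ} (A B : Equiv.Perm (Fin N)) : Multiset ℕ :=
  orbitSizes (Subgroup.closure {A, B})

/-- Doubling every part of a partition (as a multiset). -/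
def twice (m : Multiset ℕ) : Multiset ℕ := m.map (fun i => 2 * i)

/-- Perfect matchings of the complete graph on `Fin N`. -/
abbrev PerfMatching (N : ℕ) := {A : Equiv.Perm (Fin N) // A * A = 1 ∧ ∀ x, A x ≠ x}

/-- The orbital basis element `N_{2μ}` of the Bose–Mesner algebra, as a matrix acting
on `ℂ[M_{2n}]`. -/
noncomputable def Nmat (n : ℕ) (μ : Nat.Partition n) :
    Matrix (PerfMatching (2 * n)) (PerfMatching (2 * n)) ℂ :=
  Matrix.of fun A B => if dMatch A.1 B.1 = twice μ.parts then 1 else 0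

/-- The vector `v = Σ_A A − (2n−1)·Σ_{e∈A} A ∈ ℂ[M_{2n}]`, where the second sum ranges
over the perfect matchings containing the fixed edge `e = {x,y}`; in coordinates its
`A`-entry is `1 − (2n−1)` if `A` contains `e`, and `1` otherwise. -/
noncomputable def gzVec (n : ℕ) (x y : Fin (2 * n)) : PerfMatching (2 * n) → ℂ :=
  fun A => if A.1 x = y then 1 - (2 * (n : ℂ) - 1) else 1

/-!
Fix `m = 2μ` and write `c(A, a, b)` for the number of matchings `B` with `d(A, B) = m` that
contain the edge `{a, b}`. Since `d` is invariant under simultaneous conjugation, and the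
centralizer of a matching `A` acts transitively both on the ordered edges of `A` and on the
ordered non-edges, `c(A, a, b)` only depends on whether `{a, b}` is an edge of `A`; call the
value `p` on edges. Sorting the matchings `B` by the partner of `x` gives
`P(2μ) = p + (2n - 2) c(A, x, y)` when `{x, y}` is not an edge of `A`, and the `A`-entry of
`N_{2μ} v` is `P(2μ) - (2n - 1) c(A, x, y)`. Together these make `v` an eigenvector with
eigenvalue `(P(2μ) - (2n - 1) p) / (-(2n - 2))`. Finally a common edge of `A` and `B` is an
orbit of size `2`, so `p = 0` when `1 ∉ μ`; when `1 ∈ μ`, deleting the common edge identifies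
the matchings counted by `p` with those counted by `P'(2μ')`.
-/

section OrbitSizes

open Equiv MulAction Finset Subgroup
open scoped Pointwise

variable {α β : Type*}

lemma mem_orbit_subgroup_iff {G : Subgroup (Perm α)} {a b : α} :
    b ∈ orbit G a ↔ ∃ g ∈ G, g a = b := by
  simp [mem_orbit_iff, Subgroup.smul_def, Perm.smul_def]

lemma orbit_closure_subset {S : Set (Perm α)} {s : Set α} (hS : S ⊆ stabilizer (Perm α) s)
    {a : α} (ha : a ∈ s) : orbit (closure S) a ⊆ s := by
  intro b hb
  obtain ⟨g, hg, rfl⟩ := mem_orbit_subgroup_iff.mp hb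
  rw [← mem_stabilizer_iff.mp (closure_le _ |>.mpr hS hg)]
  exact Set.smul_mem_smul_set ha

lemma orbit_map_permCongrHom (e : α ≃ β) (G : Subgroup (Perm α)) (a : α) :
    orbit (G.map e.permCongrHom.toMonoidHom) (e a) = e '' orbit G a := by
  ext b
  rw [mem_orbit_subgroup_iff]
  simp [mem_orbit_subgroup_iff, eq_symm_apply]

lemma orbit_map_sumCongrHom_inl (K : Subgroup (Perm α × Perm β)) (a : α) :
    orbit (K.map (Perm.sumCongrHom α β)) (Sum.inl a : α ⊕ β) =
      Sum.inl '' orbit (K.map (MonoidHom.fst _ _)) a := by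
  ext z
  simp only [mem_orbit_subgroup_iff, Subgroup.mem_map, Set.mem_image]
  constructor
  · rintro ⟨_, ⟨k, hk, rfl⟩, rfl⟩
    exact ⟨k.1 a, ⟨_, ⟨k, hk, rfl⟩, rfl⟩, rfl⟩
  · rintro ⟨_, ⟨_, ⟨k, hk, rfl⟩, rfl⟩, rfl⟩
    exact ⟨_, ⟨k, hk, rfl⟩, rfl⟩

lemma orbit_map_sumCongrHom_inr (K : Subgroup (Perm α × Perm β)) (b : β) :
    orbit (K.map (Perm.sumCongrHom α β)) (Sum.inr b : α ⊕ β) =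
      Sum.inr '' orbit (K.map (MonoidHom.snd _ _)) b := by
  ext z
  simp only [mem_orbit_subgroup_iff, Subgroup.mem_map, Set.mem_image]
  constructor
  · rintro ⟨_, ⟨k, hk, rfl⟩, rfl⟩
    exact ⟨k.2 b, ⟨_, ⟨k, hk, rfl⟩, rfl⟩, rfl⟩
  · rintro ⟨_, ⟨_, ⟨k, hk, rfl⟩, rfl⟩, rfl⟩
    exact ⟨_, ⟨k, hk, rfl⟩, rfl⟩

variable [Fintype α] [Fintype β]

lemma mem_orbitSizes (G : Subgroup (Perm α)) (a : α) : Nat.card (orbit G a) ∈ orbitSizes G := by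
  let : Fintype (Quotient (orbitRel G α)) := Fintype.ofFinite _
  refine Multiset.mem_map.mpr ⟨⟦a⟧, mem_univ _, ?_⟩
  rw [orbit_eq_iff.mpr (Quotient.mk_out (s := orbitRel G α) a)]

lemma zero_notMem_orbitSizes (G : Subgroup (Perm α)) : 0 ∉ orbitSizes G := by
  intro h
  obtain ⟨q, -, hq⟩ := Multiset.mem_map.mp h
  exact (Nat.card_pos_iff.mpr ⟨⟨q.out, mem_orbit_self q.out⟩, inferInstance⟩).ne' hq

/- An orbit of size `k` contains exactly `k` points whose orbit has size `k`; since no orbit is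
empty, these point counts determine `orbitSizes` (`orbitSizes_eq_of_count_mul`). -/
lemma count_orbitSizes_mul (G : Subgroup (Perm α)) (k : ℕ) :
    (orbitSizes G).count k * k = #{a : α | Nat.card (orbit G a) = k} := by
  classical
  let : Fintype (Quotient (orbitRel G α)) := Fintype.ofFinite _
  have hfib : ∀ q : Quotient (orbitRel G α),
      ∑ b : orbit G q.out, (if Nat.card (orbit G (b : α)) = k then 1 else 0) =
        if Nat.card (orbit G q.out) = k then k else 0 := by
    intro q
    simp_rw [fun b : orbit G q.out => orbit_eq_iff.mpr b.2]
    split_ifs with h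
    · simp [← h, Nat.card_eq_fintype_card]
    · simp
  rw [card_filter, ← (selfEquivSigmaOrbits G α).symm.sum_comp, Fintype.sum_sigma]
  change _ = ∑ q : Quotient (orbitRel G α),
    ∑ b : orbit G q.out, (if Nat.card (orbit G (b : α)) = k then 1 else 0)
  rw [Fintype.sum_congr _ _ hfib, sum_ite, sum_const_zero, add_zero, sum_const, smul_eq_mul,
    orbitSizes, Multiset.count_map]
  simp only [eq_comm (a := k)]
  rfl

lemma orbitSizes_eq_of_count_mul {G : Subgroup (Perm α)} {M : Multiset ℕ} (h0 : 0 ∉ M)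
    (h : ∀ k, M.count k * k = #{a : α | Nat.card (orbit G a) = k}) : orbitSizes G = M := by
  ext k
  rcases Nat.eq_zero_or_pos k with rfl | hk
  · rw [Multiset.count_eq_zero.mpr (zero_notMem_orbitSizes G), Multiset.count_eq_zero.mpr h0]
  · exact Nat.eq_of_mul_eq_mul_right hk ((count_orbitSizes_mul G k).trans (h k).symm)

lemma orbitSizes_map_permCongrHom (e : α ≃ β) (G : Subgroup (Perm α)) :
    orbitSizes (G.map e.permCongrHom.toMonoidHom) = orbitSizes G := by
  refine orbitSizes_eq_of_count_mul (zero_notMem_orbitSizes G) fun k => ?_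
  rw [count_orbitSizes_mul]
  refine card_equiv e fun a => ?_
  simp only [mem_filter, mem_univ, true_and]
  rw [orbit_map_permCongrHom, Nat.card_image_of_injective e.injective]

lemma orbitSizes_closure_image_permCongr (e : α ≃ β) (S : Set (Perm α)) :
    orbitSizes (closure (e.permCongr '' S)) = orbitSizes (closure S) := by
  rw [← orbitSizes_map_permCongrHom e, MonoidHom.map_closure]
  rfl

lemma orbitSizes_map_sumCongrHom (K : Subgroup (Perm α × Perm β)) :
    orbitSizes (K.map (Perm.sumCongrHom α β)) =
      orbitSizes (K.map (MonoidHom.fst _ _)) + orbitSizes (K.map (MonoidHom.snd _ _)) := by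
  classical
  refine orbitSizes_eq_of_count_mul (by simp [zero_notMem_orbitSizes]) fun k => ?_
  rw [Multiset.count_add, add_mul, count_orbitSizes_mul, count_orbitSizes_mul, card_filter,
    card_filter, card_filter, Fintype.sum_sum_type]
  simp only [orbit_map_sumCongrHom_inl, orbit_map_sumCongrHom_inr,
    Nat.card_image_of_injective Sum.inl_injective, Nat.card_image_of_injective Sum.inr_injective]

lemma orbitSizes_closure_pair_sumCongr (A B : Perm α) (C D : Perm β) :
    orbitSizes (closure {A.sumCongr C, B.sumCongr D}) =
      orbitSizes (closure {A, B}) + orbitSizes (closure {C, D}) := by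
  have h : ({A.sumCongr C, B.sumCongr D} : Set (Perm (α ⊕ β))) =
      Perm.sumCongrHom α β '' {(A, C), (B, D)} := by
    simp [Set.image_pair]
  rw [h, ← MonoidHom.map_closure, orbitSizes_map_sumCongrHom, MonoidHom.map_closure,
    MonoidHom.map_closure, Set.image_pair, Set.image_pair]
  rfl

lemma orbitSizes_closure_swap_fin_two : orbitSizes (closure {swap (0 : Fin 2) 1}) = {2} := by
  have horbit : ∀ i : Fin 2, orbit (closure {swap (0 : Fin 2) 1}) i = Set.univ := by
    refine fun i => Set.eq_univ_of_forall fun j => mem_orbit_subgroup_iff.mpr ?_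
    by_cases h : i = j
    · exact ⟨1, one_mem _, h ▸ rfl⟩
    · exact ⟨swap 0 1, subset_closure rfl, by fin_cases i <;> fin_cases j <;> simp_all⟩
  refine orbitSizes_eq_of_count_mul (by simp) fun k => ?_
  rcases eq_or_ne k 2 with rfl | hk
  · simp [horbit]
  · simp [horbit, hk, Ne.symm hk]

lemma two_mem_orbitSizes_closure_pair {A B : Perm α} {x y : α} (hxy : x ≠ y)
    (hA : A x = y) (hA' : A y = x) (hB : B x = y) (hB' : B y = x) :
    2 ∈ orbitSizes (closure {A, B}) := by
  have hstab : ∀ C : Perm α, C x = y → C y = x →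
      C ∈ stabilizer (Perm α) ({x, y} : Set α) := by
    intro C h h'
    rw [mem_stabilizer_iff, Set.smul_set_insert, Set.smul_set_singleton, Perm.smul_def,
      Perm.smul_def, h, h', Set.pair_comm]
  have horbit : orbit (closure {A, B}) x = {x, y} := by
    refine (orbit_closure_subset ?_ (Set.mem_insert x _)).antisymm ?_
    · rintro C (rfl | rfl)
      exacts [hstab C hA hA', hstab C hB hB']
    · rintro z (rfl | rfl)
      exacts [mem_orbit_self z, mem_orbit_subgroup_iff.mpr ⟨A, subset_closure (Or.inl rfl), hA⟩]
  simpa [horbit, Set.ncard_pair hxy] using mem_orbitSizes (closure {A, B}) x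

end OrbitSizes

section Matchings

open Equiv

variable {α β : Type*}

def IsPerfectMatching (A : Perm α) : Prop := A * A = 1 ∧ ∀ x, A x ≠ x

namespace IsPerfectMatching

variable {A : Perm α} (hA : IsPerfectMatching A)
include hA

lemma apply_apply (x : α) : A (A x) = x := by
  simpa using congrArg (· x) hA.1

lemma ne_apply_iff {x y : α} : x ≠ A y ↔ A x ≠ y := by
  rw [not_iff_not, ← hA.apply_apply x, (Equiv.injective A).eq_iff, hA.apply_apply]

lemma permCongr (e : α ≃ β) : IsPerfectMatching (e.permCongr A) := by
  refine ⟨by rw [← permCongrHom_coe, ← map_mul, hA.1, map_one],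
    fun b h => hA.2 (e.symm b) ?_⟩
  simpa [permCongr_apply, eq_symm_apply] using h

lemma sumCongr_swap : IsPerfectMatching (A.sumCongr (swap (0 : Fin 2) 1)) := by
  refine ⟨by rw [Perm.sumCongr_mul, hA.1, swap_mul_self, Perm.sumCongr_one], ?_⟩
  rintro (a | i) h
  · exact hA.2 a (Sum.inl_injective h)
  · fin_cases i <;> simp at h

lemma cycleType [Fintype α] [DecidableEq α] :
    A.cycleType = Multiset.replicate (Fintype.card α / 2) 2 := by
  have hdvd : orderOf A ∣ 2 := orderOf_dvd_of_pow_eq_one (by rw [pow_two, hA.1])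
  have htwo : ∀ r ∈ A.cycleType, r = 2 := fun r hr =>
    le_antisymm (Nat.le_of_dvd two_pos ((Perm.dvd_of_mem_cycleType hr).trans hdvd))
      (Perm.two_le_of_mem_cycleType hr)
  have hsum : A.cycleType.sum = Fintype.card α := by
    rw [Perm.sum_cycleType, Finset.eq_univ_of_forall fun x => Perm.mem_support.mpr (hA.2 x),
      Finset.card_univ]
  rw [Multiset.eq_replicate_card.mpr htwo] at hsum ⊢
  rw [Multiset.sum_replicate, smul_eq_mul] at hsum
  congr 1
  omega

lemma isConj [Fintype α] {B : Perm α} (hB : IsPerfectMatching B) : IsConj A B := by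
  classical
  exact Perm.isConj_iff_cycleType_eq.mpr (by rw [hA.cycleType, hB.cycleType])

lemma exists_commute_apply_eq (u w : α) :
    ∃ ρ : Perm α, Commute ρ A ∧ ρ u = w ∧
      ∀ z, z ≠ u → z ≠ A u → z ≠ w → z ≠ A w → ρ z = z := by
  classical
  by_cases hw : w = A u
  · refine ⟨swap u w, ?_, swap_apply_left u w, fun z h1 _ h3 _ => swap_apply_of_ne_of_ne h1 h3⟩
    subst hw
    show swap u (A u) * A = A * swap u (A u)
    rw [mul_swap_eq_swap_mul, hA.apply_apply, swap_comm]
  · have hAw : A w ≠ u := fun h => hw (by rw [← h, hA.apply_apply])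
    have hswaps : Commute (swap u w) (swap (A u) (A w)) := by
      rcases eq_or_ne u w with rfl | huw
      · simp
      · exact Perm.Disjoint.commute (Perm.disjoint_swap_swap (by
          simp [huw, hw, Ne.symm hAw, (hA.2 u).symm, (hA.2 w).symm]))
    refine ⟨swap u w * swap (A u) (A w), ?_, ?_, fun z h1 h2 h3 h4 => ?_⟩
    · have hconj : A * swap (A u) (A w) = swap u w * A := by
        rw [mul_swap_eq_swap_mul, hA.apply_apply, hA.apply_apply]
      calc swap u w * swap (A u) (A w) * A = swap (A u) (A w) * (swap u w * A) := by
            rw [hswaps.eq, mul_assoc]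
        _ = swap (A u) (A w) * (A * swap (A u) (A w)) := by rw [hconj]
        _ = A * swap u w * swap (A u) (A w) := by rw [← mul_assoc, ← mul_swap_eq_swap_mul]
        _ = A * (swap u w * swap (A u) (A w)) := mul_assoc _ _ _
    · rw [Perm.mul_apply, swap_apply_of_ne_of_ne (hA.2 u).symm (Ne.symm hAw), swap_apply_left]
    · rw [Perm.mul_apply, swap_apply_of_ne_of_ne h2 h4, swap_apply_of_ne_of_ne h1 h3]

lemma exists_commute_flag {x y x' y' : α} (hxy : x ≠ y) (hxy' : x' ≠ y')
    (h : A x = y ↔ A x' = y') : ∃ ρ : Perm α, Commute ρ A ∧ ρ x = x' ∧ ρ y = y' := by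
  -- `ρ₁` moves `x` to `x'`; for a non-edge, `ρ₂` then moves `ρ₁ y` to `y'` and fixes `x'`.
  obtain ⟨ρ₁, hc₁, hx₁, -⟩ := hA.exists_commute_apply_eq x x'
  have hAx₁ : ρ₁ (A x) = A x' := by rw [← Perm.mul_apply, hc₁.eq, Perm.mul_apply, hx₁]
  by_cases hedge : A x = y
  · exact ⟨ρ₁, hc₁, hx₁, by rw [← hedge, hAx₁, h.mp hedge]⟩
  obtain ⟨ρ₂, hc₂, hw₂, hfix⟩ := hA.exists_commute_apply_eq (ρ₁ y) y'
  have hx₂ : ρ₂ x' = x' := by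
    refine hfix x' ?_ ?_ hxy' (hA.ne_apply_iff.mpr (mt h.mpr hedge))
    · rw [← hx₁]
      exact ρ₁.injective.ne hxy
    · rw [hA.ne_apply_iff, ← hAx₁]
      exact ρ₁.injective.ne hedge
  exact ⟨ρ₂ * ρ₁, hc₂.mul_left hc₁, by rw [Perm.mul_apply, hx₁, hx₂], hw₂⟩

lemma exists_conj_flag [Fintype α] {A' : Perm α} (hA' : IsPerfectMatching A') {x y x' y' : α}
    (hxy : x ≠ y) (hxy' : x' ≠ y') (h : A x = y ↔ A' x' = y') :
    ∃ σ : Perm α, σ * A * σ⁻¹ = A' ∧ σ x = x' ∧ σ y = y' := by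
  obtain ⟨τ, hτ⟩ := isConj_iff.mp (hA.isConj hA')
  have hτA : ∀ z, A' (τ z) = τ (A z) := fun z => by simp [← hτ]
  obtain ⟨ρ, hρ, hx, hy⟩ :=
    hA'.exists_commute_flag (τ.injective.ne hxy) hxy' (by rw [hτA, τ.injective.eq_iff, h])
  refine ⟨ρ * τ, ?_, hx, hy⟩
  calc ρ * τ * A * (ρ * τ)⁻¹ = ρ * (τ * A * τ⁻¹) * ρ⁻¹ := by group
    _ = A' := by rw [hτ, hρ.eq, mul_inv_cancel_right]

end IsPerfectMatching

lemma isPerfectMatching_permCongr_iff {A : Perm α} (e : α ≃ β) :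
    IsPerfectMatching (e.permCongr A) ↔ IsPerfectMatching A := by
  refine ⟨fun h => ?_, fun h => h.permCongr e⟩
  have := h.permCongr e.symm
  rwa [← permCongr_symm, symm_apply_apply] at this

lemma IsPerfectMatching.exists_eq_sumCongr_swap [Finite α] {g : Perm (α ⊕ Fin 2)}
    (hg : IsPerfectMatching g) (h0 : g (Sum.inr 0) = Sum.inr 1) :
    ∃ B : Perm α, IsPerfectMatching B ∧ g = B.sumCongr (swap 0 1) := by
  have h1 : g (Sum.inr 1) = Sum.inr 0 := by rw [← h0, hg.apply_apply]
  have hmaps : Set.MapsTo g (Set.range Sum.inl) (Set.range Sum.inl) := by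
    rintro _ ⟨a, rfl⟩
    rcases hz : g (Sum.inl a) with b | i
    · exact ⟨b, rfl⟩
    · fin_cases i
      · exact absurd (g.injective (hz.trans h1.symm)) Sum.inl_ne_inr
      · exact absurd (g.injective (hz.trans h0.symm)) Sum.inl_ne_inr
  obtain ⟨⟨B, u⟩, hBu⟩ := Perm.mem_sumCongrHom_range_of_perm_mapsTo_inl hmaps
  change B.sumCongr u = g at hBu
  subst hBu
  have hu : u = swap 0 1 := by
    have hu0 : u 0 = 1 := Sum.inr_injective h0
    have hu1 : u 1 = 0 := Sum.inr_injective h1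
    ext i
    fin_cases i <;> simp [hu0, hu1]
  subst hu
  refine ⟨B, ⟨?_, fun a ha => hg.2 (Sum.inl a) (by simp [ha])⟩, rfl⟩
  ext a
  simpa using congrArg (· (Sum.inl a)) hg.1

end Matchings

section MatchingCounts

open Equiv Finset

lemma dMatch_conj {N : ℕ} (σ A B : Perm (Fin N)) :
    dMatch (σ * A * σ⁻¹) (σ * B * σ⁻¹) = dMatch A B := by
  rw [dMatch, dMatch, ← permCongr_eq_mul, ← permCongr_eq_mul, ← Set.image_pair σ.permCongr,
    orbitSizes_closure_image_permCongr]

namespace PerfMatching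

variable {N M : ℕ}

def conjEquiv (σ : Perm (Fin N)) : PerfMatching N ≃ PerfMatching N :=
  σ.permCongr.subtypeEquiv fun _ => (isPerfectMatching_permCongr_iff σ).symm

lemma conjEquiv_apply_coe (σ : Perm (Fin N)) (B : PerfMatching N) :
    (conjEquiv σ B).1 = σ * B.1 * σ⁻¹ :=
  permCongr_eq_mul σ B.1

def extend (E : Fin N ⊕ Fin 2 ≃ Fin M) (B : PerfMatching N) : PerfMatching M :=
  ⟨E.permCongr (B.1.sumCongr (swap 0 1)),
    IsPerfectMatching.permCongr (IsPerfectMatching.sumCongr_swap B.2) E⟩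

section Extend

variable (E : Fin N ⊕ Fin 2 ≃ Fin M)

lemma extend_apply_inr_zero (B : PerfMatching N) :
    (extend E B).1 (E (Sum.inr 0)) = E (Sum.inr 1) := by
  simp [extend]

lemma extend_injective : Function.Injective (extend E) := by
  intro B B' h
  refine Subtype.ext (Equiv.ext fun a => Sum.inl_injective (E.injective ?_))
  simpa [extend] using congrArg (fun C : PerfMatching M => C.1 (E (Sum.inl a))) h

lemma exists_extend_eq (B : PerfMatching M) (h : B.1 (E (Sum.inr 0)) = E (Sum.inr 1)) :
    ∃ B', extend E B' = B := by
  obtain ⟨B', hB', hB⟩ := IsPerfectMatching.exists_eq_sumCongr_swap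
    (IsPerfectMatching.permCongr B.2 E.symm) (by simp [h])
  refine ⟨⟨B', hB'⟩, Subtype.ext ?_⟩
  change E.permCongr (B'.sumCongr (swap 0 1)) = B.1
  rw [← hB, ← permCongr_symm, apply_symm_apply]

lemma dMatch_extend (A B : PerfMatching N) :
    dMatch (extend E A).1 (extend E B).1 = 2 ::ₘ dMatch A.1 B.1 := by
  change orbitSizes (Subgroup.closure
    {E.permCongr (A.1.sumCongr (swap 0 1)), E.permCongr (B.1.sumCongr (swap 0 1))}) = _
  rw [← Set.image_pair E.permCongr, orbitSizes_closure_image_permCongr,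
    orbitSizes_closure_pair_sumCongr, Set.pair_eq_singleton, orbitSizes_closure_swap_fin_two,
    add_comm, Multiset.singleton_add]
  rfl

end Extend

noncomputable def numAtDist (A : PerfMatching N) (m : Multiset ℕ) : ℕ :=
  Nat.card {B : PerfMatching N // dMatch A.1 B.1 = m}

noncomputable def numAtDistWithEdge (A : PerfMatching N) (m : Multiset ℕ) (a b : Fin N) : ℕ :=
  Nat.card {B : PerfMatching N // dMatch A.1 B.1 = m ∧ B.1 a = b}

variable {m : Multiset ℕ}

lemma numAtDist_conj {A A' : PerfMatching N} {σ : Perm (Fin N)} (hσ : σ * A.1 * σ⁻¹ = A'.1) :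
    numAtDist A m = numAtDist A' m :=
  Nat.card_congr <| (conjEquiv σ).subtypeEquiv fun B => by
    rw [conjEquiv_apply_coe, ← hσ, dMatch_conj]

lemma numAtDistWithEdge_conj {A A' : PerfMatching N} {σ : Perm (Fin N)}
    (hσ : σ * A.1 * σ⁻¹ = A'.1) (a b : Fin N) :
    numAtDistWithEdge A m a b = numAtDistWithEdge A' m (σ a) (σ b) :=
  Nat.card_congr <| (conjEquiv σ).subtypeEquiv fun B => by
    simp [conjEquiv_apply_coe, ← hσ, dMatch_conj]

lemma numAtDist_eq (A A' : PerfMatching N) : numAtDist A m = numAtDist A' m := by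
  obtain ⟨σ, hσ⟩ := isConj_iff.mp (IsPerfectMatching.isConj A.2 A'.2)
  exact numAtDist_conj hσ

lemma numAtDistWithEdge_eq {A A' : PerfMatching N} {x y x' y' : Fin N} (hxy : x ≠ y)
    (hxy' : x' ≠ y') (h : A.1 x = y ↔ A'.1 x' = y') :
    numAtDistWithEdge A m x y = numAtDistWithEdge A' m x' y' := by
  obtain ⟨σ, hσ, rfl, rfl⟩ := IsPerfectMatching.exists_conj_flag A.2 A'.2 hxy hxy' h
  exact numAtDistWithEdge_conj hσ x y

lemma numAtDist_eq_sum (A : PerfMatching N) (x : Fin N) :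
    numAtDist A m = ∑ b, numAtDistWithEdge A m x b := by
  classical
  simp only [numAtDist, numAtDistWithEdge, Nat.card_eq_fintype_card, Fintype.card_subtype]
  rw [card_eq_sum_card_fiberwise (f := fun B : PerfMatching N => B.1 x) (t := univ)
    fun _ _ => mem_univ _]
  simp [filter_filter]

lemma numAtDistWithEdge_self (A : PerfMatching N) (x : Fin N) :
    numAtDistWithEdge A m x x = 0 :=
  Nat.card_eq_zero.mpr (Or.inl ⟨fun B => B.1.2.2 x B.2.2⟩)

lemma numAtDist_eq_add (A : PerfMatching N) {x y : Fin N} (hxy : x ≠ y) (hAxy : A.1 x ≠ y) :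
    numAtDist A m = numAtDistWithEdge A m x (A.1 x) + (N - 2) * numAtDistWithEdge A m x y := by
  have hAx : A.1 x ∈ univ.erase x := mem_erase.mpr ⟨A.2.2 x, mem_univ _⟩
  have hnonedge : ∀ b ∈ (univ.erase x).erase (A.1 x),
      numAtDistWithEdge A m x b = numAtDistWithEdge A m x y := fun b hb => by
    obtain ⟨hbA, hbx, -⟩ := by simpa only [mem_erase] using hb
    exact numAtDistWithEdge_eq (Ne.symm hbx) hxy (iff_of_false (Ne.symm hbA) hAxy)
  rw [numAtDist_eq_sum A x, ← add_sum_erase _ _ (mem_univ x), numAtDistWithEdge_self,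
    zero_add, ← add_sum_erase _ _ hAx, sum_congr rfl hnonedge, sum_const,
    card_erase_of_mem hAx, card_erase_of_mem (mem_univ x), card_univ, Fintype.card_fin,
    smul_eq_mul, Nat.sub_sub]

lemma numAtDistWithEdge_eq_zero {A : PerfMatching N} (hm : 2 ∉ m) {a b : Fin N}
    (hab : A.1 a = b) : numAtDistWithEdge A m a b = 0 := by
  refine Nat.card_eq_zero.mpr (Or.inl ⟨fun ⟨B, hd, hBab⟩ => hm ?_⟩)
  rw [← hd]
  exact two_mem_orbitSizes_closure_pair (hab ▸ (A.2.2 a).symm) hab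
    (by rw [← hab, IsPerfectMatching.apply_apply A.2]) hBab
    (by rw [← hBab, IsPerfectMatching.apply_apply B.2])

lemma numAtDistWithEdge_extend (E : Fin N ⊕ Fin 2 ≃ Fin M) (J' : PerfMatching N)
    (m' : Multiset ℕ) :
    numAtDistWithEdge (extend E J') (2 ::ₘ m') (E (Sum.inr 0)) (E (Sum.inr 1)) =
      numAtDist J' m' := by
  refine (Nat.card_eq_of_bijective (fun B => ⟨extend E B.1, by rw [dMatch_extend, B.2],
    extend_apply_inr_zero E B.1⟩) ⟨fun B B' h => ?_, fun B => ?_⟩).symm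
  · exact Subtype.ext (extend_injective E (congrArg Subtype.val h))
  · obtain ⟨B', hB'⟩ := exists_extend_eq E B.1 B.2.2
    have hd := B.2.1
    rw [← hB', dMatch_extend] at hd
    exact ⟨⟨B', Multiset.cons_inj_right 2 |>.mp hd⟩, Subtype.ext hB'⟩

lemma numAtDistWithEdge_cons_two (h : N + 2 = M) (A : PerfMatching M) {a b : Fin M}
    (hab : A.1 a = b) (J' : PerfMatching N) (m' : Multiset ℕ) :
    numAtDistWithEdge A (2 ::ₘ m') a b = numAtDist J' m' := by
  let E : Fin N ⊕ Fin 2 ≃ Fin M := finSumFinEquiv.trans (finCongr h)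
  rw [← numAtDistWithEdge_extend E J' m']
  exact numAtDistWithEdge_eq (hab ▸ (A.2.2 a).symm) (E.injective.ne (by simp))
    (iff_of_true hab (extend_apply_inr_zero E J'))

end PerfMatching

open PerfMatching

lemma two_notMem_twice {s : Multiset ℕ} (h : 1 ∉ s) : 2 ∉ twice s := by
  simp only [twice, Multiset.mem_map, not_exists, not_and]
  intro i hi hi2
  exact h (by rwa [show i = 1 by omega] at hi)

lemma twice_eq_cons_of_one_mem {s : Multiset ℕ} (h : 1 ∈ s) :
    twice s = 2 ::ₘ twice (s.erase 1) := by
  conv_lhs => rw [twice, ← Multiset.cons_erase h, Multiset.map_cons]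
  rfl

lemma Nmat_mulVec_gzVec_apply (n : ℕ) (μ : Nat.Partition n) (x y : Fin (2 * n))
    (A : PerfMatching (2 * n)) :
    (Nmat n μ).mulVec (gzVec n x y) A =
      numAtDist A (twice μ.parts) - (2 * n - 1) * numAtDistWithEdge A (twice μ.parts) x y := by
  classical
  simp only [Matrix.mulVec, dotProduct, Nmat, Matrix.of_apply, gzVec, numAtDist,
    numAtDistWithEdge, Nat.card_eq_fintype_card, Fintype.card_subtype]
  rw [natCast_card_filter, natCast_card_filter, mul_sum, ← sum_sub_distrib]
  refine sum_congr rfl fun B _ => ?_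
  split_ifs <;> simp_all

lemma Nmat_mulVec_gzVec {n : ℕ} (hn : 2 ≤ n) {x y : Fin (2 * n)} (hxy : x ≠ y)
    (μ : Nat.Partition n) (J : PerfMatching (2 * n)) (a : Fin (2 * n)) :
    (Nmat n μ).mulVec (gzVec n x y) =
      (((numAtDist J (twice μ.parts) : ℂ) -
          (2 * n - 1) * numAtDistWithEdge J (twice μ.parts) a (J.1 a)) /
        (-(2 * (n : ℂ) - 2))) • gzVec n x y := by
  set m := twice μ.parts
  have hne : -(2 * (n : ℂ) - 2) ≠ 0 := by
    rw [neg_ne_zero, sub_ne_zero]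
    exact_mod_cast (by omega : 2 * n ≠ 2)
  have hedge : ∀ A : PerfMatching (2 * n),
      numAtDistWithEdge A m x (A.1 x) = numAtDistWithEdge J m a (J.1 a) := fun A =>
    numAtDistWithEdge_eq (A.2.2 x).symm (J.2.2 a).symm (iff_of_true rfl rfl)
  ext A
  rw [Nmat_mulVec_gzVec_apply, numAtDist_eq A J, Pi.smul_apply, smul_eq_mul, gzVec]
  by_cases hA : A.1 x = y
  · rw [if_pos hA, ← hA, hedge, show (1 : ℂ) - (2 * n - 1) = -(2 * n - 2) by ring,
      div_mul_cancel₀ _ hne]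
  · have hfib : (numAtDist J m : ℂ) =
        numAtDistWithEdge J m a (J.1 a) + (2 * n - 2) * numAtDistWithEdge A m x y := by
      rw [numAtDist_eq J A, numAtDist_eq_add A hxy hA, hedge]
      push_cast [Nat.cast_sub (by omega : 2 ≤ 2 * n)]
      ring
    rw [if_neg hA, mul_one, eq_div_iff hne, hfib]
    ring

end MatchingCounts

/-- The vector `v = Σ_A A − (2n−1)·Σ_{A ∋ e} A` is a simultaneous eigenvector of all
the orbital basis elements `N_{2μ}`, with the indicated eigenvalues: writing `P(2μ)`
for the number of perfect matchings `B` of `Fin (2n)` with `d(J,B) = 2μ` (independent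
of the perfect matching `J`), the eigenvalue of `N_{2μ}` is `P(2μ)/(−(2n−2))` if `1` is
not a part of `μ`, and `(P(2μ) − (2n−1)·P'(2μ'))/(−(2n−2))` if `1` is a part of `μ`,
where `μ' ⊢ n−1` is `μ` with one part `1` removed and `P'` is the corresponding count
for perfect matchings of `Fin (2n−2)`. -/
theorem gzVec_eigenvector (n : ℕ) (hn : 2 ≤ n) (x y : Fin (2 * n)) (hxy : x ≠ y)
    (μ : Nat.Partition n) (J : PerfMatching (2 * n)) :
    (1 ∉ μ.parts →
      (Nmat n μ).mulVec (gzVec n x y) =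
        ((Nat.card {B : PerfMatching (2 * n) // dMatch J.1 B.1 = twice μ.parts} : ℂ) /
            (-(2 * (n : ℂ) - 2))) • gzVec n x y) ∧
    (1 ∈ μ.parts →
      ∀ (J' : PerfMatching (2 * (n - 1))) (μ' : Nat.Partition (n - 1)),
        μ'.parts = μ.parts.erase 1 →
        (Nmat n μ).mulVec (gzVec n x y) =
          (((Nat.card {B : PerfMatching (2 * n) // dMatch J.1 B.1 = twice μ.parts} : ℂ) -
              (2 * (n : ℂ) - 1) *
                (Nat.card {B' : PerfMatching (2 * (n - 1)) //
                  dMatch J'.1 B'.1 = twice μ'.parts} : ℂ)) /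
            (-(2 * (n : ℂ) - 2))) • gzVec n x y) := by
  rw [Nmat_mulVec_gzVec hn hxy μ J x]
  refine ⟨fun h1 => ?_, fun h1 J' μ' hμ' => ?_⟩
  · rw [PerfMatching.numAtDistWithEdge_eq_zero (two_notMem_twice h1) rfl, Nat.cast_zero,
      mul_zero, sub_zero]
    rfl
  · rw [twice_eq_cons_of_one_mem h1, ← hμ',
      PerfMatching.numAtDistWithEdge_cons_two (by omega) J rfl J']
    rfl
end
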